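/- Let (γ,v₁,v₂) be a pseudo-spherical timelike framed curve with curvature (α,ℓ,m,n). Fix φ ∈ ℝ and let θ : I → ℝ be smooth with θ'(s) = -ℓ(s). Define the anti-de Sitter parallel γ^φ(s) = cosh φ·γ(s) + sinh φ·(cos θ(s)·v₁(s) + sin θ(s)·v₂(s)), and set v₁^φ = sinh φ·γ + cosh φ·(cos θ·v₁ + sin θ·v₂) and v₂^φ = -sin θ·v₁ + cos θ·v₂. Then (γ^φ, v₁^φ, v₂^φ) is a pseudo-spherical timelike framed curve whose curvature is (α^φ, 0, m^φ, n^φ), where α^φ = cosh φ·α + sinh φ·(cos θ·m + sin θ·n), m^φ = sinh φ·α + cosh φ·(cos θ·m + sin θ·n), and n^φ = -sin θ·m + cos θ·n. -/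

import Mathlib

noncomputable section

/-- The index-2 pseudo-scalar product on `ℝ⁴₂`. -/
def pdot (u w : Fin 4 → ℝ) : ℝ :=
  -(u 0 * w 0) - u 1 * w 1 + u 2 * w 2 + u 3 * w 3

/-- 3×3 determinant. -/
def det3 (a b c d e f g h i : ℝ) : ℝ :=
  a * (e * i - f * h) - b * (d * i - f * g) + c * (d * h - e * g)

/-- The triple product `u×v×w` in `ℝ⁴₂`. -/
def tripleProd (u v w : Fin 4 → ℝ) : Fin 4 → ℝ :=
  ![ -det3 (u 1) (u 2) (u 3) (v 1) (v 2) (v 3) (w 1) (w 2) (w 3),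
      det3 (u 0) (u 2) (u 3) (v 0) (v 2) (v 3) (w 0) (w 2) (w 3),
      det3 (u 0) (u 1) (u 3) (v 0) (v 1) (v 3) (w 0) (w 1) (w 3),
     -det3 (u 0) (u 1) (u 2) (v 0) (v 1) (v 2) (w 0) (w 1) (w 2)]

/-- `μ(s) = γ(s)×v₁(s)×v₂(s)`. -/
def muOf (γ v₁ v₂ : ℝ → Fin 4 → ℝ) (s : ℝ) : Fin 4 → ℝ :=
  tripleProd (γ s) (v₁ s) (v₂ s)

/-- Pseudo-spherical spacelike framed curve on the open interval `I`. -/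
structure SpacelikeFramed (I : Set ℝ) (γ v₁ v₂ : ℝ → Fin 4 → ℝ) (ε : ℝ) : Prop where
  smooth_γ : ContDiffOn ℝ (⊤ : ℕ∞) γ I
  smooth_v₁ : ContDiffOn ℝ (⊤ : ℕ∞) v₁ I
  smooth_v₂ : ContDiffOn ℝ (⊤ : ℕ∞) v₂ I
  eps : ε = 1 ∨ ε = -1
  ads : ∀ s ∈ I, pdot (γ s) (γ s) = -1
  normv₁ : ∀ s ∈ I, pdot (v₁ s) (v₁ s) = ε
  normv₂ : ∀ s ∈ I, pdot (v₂ s) (v₂ s) = -ε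
  orth₁ : ∀ s ∈ I, pdot (γ s) (v₁ s) = 0
  orth₂ : ∀ s ∈ I, pdot (γ s) (v₂ s) = 0
  orth₃ : ∀ s ∈ I, pdot (v₁ s) (v₂ s) = 0
  tangent₁ : ∀ s ∈ I, pdot (deriv γ s) (v₁ s) = 0
  tangent₂ : ∀ s ∈ I, pdot (deriv γ s) (v₂ s) = 0

def scurvA (γ v₁ v₂ : ℝ → Fin 4 → ℝ) (s : ℝ) : ℝ := pdot (deriv γ s) (muOf γ v₁ v₂ s)
def scurvL (ε : ℝ) (v₁ v₂ : ℝ → Fin 4 → ℝ) (s : ℝ) : ℝ := -ε * pdot (deriv v₁ s) (v₂ s)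
def scurvM (γ v₁ v₂ : ℝ → Fin 4 → ℝ) (s : ℝ) : ℝ := pdot (deriv v₁ s) (muOf γ v₁ v₂ s)
def scurvN (γ v₁ v₂ : ℝ → Fin 4 → ℝ) (s : ℝ) : ℝ := pdot (deriv v₂ s) (muOf γ v₁ v₂ s)

/-- Pseudo-spherical timelike framed curve on the open interval `I`. -/
structure TimelikeFramed (I : Set ℝ) (γ v₁ v₂ : ℝ → Fin 4 → ℝ) : Prop where
  smooth_γ : ContDiffOn ℝ (⊤ : ℕ∞) γ I
  smooth_v₁ : ContDiffOn ℝ (⊤ : ℕ∞) v₁ I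
  smooth_v₂ : ContDiffOn ℝ (⊤ : ℕ∞) v₂ I
  ads : ∀ s ∈ I, pdot (γ s) (γ s) = -1
  normv₁ : ∀ s ∈ I, pdot (v₁ s) (v₁ s) = 1
  normv₂ : ∀ s ∈ I, pdot (v₂ s) (v₂ s) = 1
  orth₁ : ∀ s ∈ I, pdot (γ s) (v₁ s) = 0
  orth₂ : ∀ s ∈ I, pdot (γ s) (v₂ s) = 0
  orth₃ : ∀ s ∈ I, pdot (v₁ s) (v₂ s) = 0
  tangent₁ : ∀ s ∈ I, pdot (deriv γ s) (v₁ s) = 0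
  tangent₂ : ∀ s ∈ I, pdot (deriv γ s) (v₂ s) = 0

def tcurvA (γ v₁ v₂ : ℝ → Fin 4 → ℝ) (s : ℝ) : ℝ := -pdot (deriv γ s) (muOf γ v₁ v₂ s)
def tcurvL (v₁ v₂ : ℝ → Fin 4 → ℝ) (s : ℝ) : ℝ := pdot (deriv v₁ s) (v₂ s)
def tcurvM (γ v₁ v₂ : ℝ → Fin 4 → ℝ) (s : ℝ) : ℝ := -pdot (deriv v₁ s) (muOf γ v₁ v₂ s)
def tcurvN (γ v₁ v₂ : ℝ → Fin 4 → ℝ) (s : ℝ) : ℝ := -pdot (deriv v₂ s) (muOf γ v₁ v₂ s)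

/-- `g(s)` for the spacelike total evolute. -/
def sG (α ℓh nh : ℝ → ℝ) (εh : ℝ) (s : ℝ) : ℝ :=
  εh * (α s * deriv nh s - nh s * deriv α s) ^ 2
    - (ℓh s) ^ 2 * (nh s) ^ 2 * ((nh s) ^ 2 + εh * (α s) ^ 2)

/-- Total evolute (with the `+` sign) of a spacelike framed immersion with curvature
`(α, ℓ̂, 0, n̂)`. -/
def sEvolute (γ f₁ f₂ : ℝ → Fin 4 → ℝ) (α ℓh nh : ℝ → ℝ) (εh : ℝ) (s : ℝ) : Fin 4 → ℝ :=
  (Real.sqrt |sG α ℓh nh εh s|)⁻¹ •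
    ((ℓh s * nh s) • (nh s • γ s - α s • f₂ s)
      - (α s * deriv nh s - nh s * deriv α s) • f₁ s)

/-- `f(s)` for the timelike total evolute. -/
def tF (α ℓh nh : ℝ → ℝ) (s : ℝ) : ℝ :=
  (α s * deriv nh s - nh s * deriv α s) ^ 2
    - (ℓh s) ^ 2 * (nh s) ^ 2 * ((nh s) ^ 2 - (α s) ^ 2)

/-- Total evolute (with the `+` sign) of a timelike framed immersion with curvature
`(α, ℓ̂, 0, n̂)`. -/
def tEvolute (γ f₁ f₂ : ℝ → Fin 4 → ℝ) (α ℓh nh : ℝ → ℝ) (s : ℝ) : Fin 4 → ℝ :=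
  (Real.sqrt |tF α ℓh nh s|)⁻¹ •
    ((ℓh s * nh s) • (nh s • γ s - α s • f₂ s)
      - (α s * deriv nh s - nh s * deriv α s) • f₁ s)

section ParallelAux

lemma pdot_comm' (u w : Fin 4 → ℝ) : pdot u w = pdot w u := by simp [pdot]; ring

lemma pdot_add_left' (u v w : Fin 4 → ℝ) : pdot (u + v) w = pdot u w + pdot v w := by
  simp [pdot]; ring

lemma pdot_add_right' (u v w : Fin 4 → ℝ) : pdot u (v + w) = pdot u v + pdot u w := by
  simp [pdot]; ring

lemma pdot_smul_left' (a : ℝ) (u w : Fin 4 → ℝ) : pdot (a • u) w = a * pdot u w := by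
  simp [pdot]; ring

lemma pdot_smul_right' (a : ℝ) (u w : Fin 4 → ℝ) : pdot u (a • w) = a * pdot u w := by
  simp [pdot]; ring

lemma pdot_trip_left (u v w : Fin 4 → ℝ) : pdot u (tripleProd u v w) = 0 := by
  simp [pdot, tripleProd, det3]; ring

lemma pdot_trip_mid (u v w : Fin 4 → ℝ) : pdot v (tripleProd u v w) = 0 := by
  simp [pdot, tripleProd, det3]; ring

lemma pdot_trip_right (u v w : Fin 4 → ℝ) : pdot w (tripleProd u v w) = 0 := by
  simp [pdot, tripleProd, det3]; ring

lemma hasDerivAt_pdot' {f g : ℝ → Fin 4 → ℝ} {f' g' : Fin 4 → ℝ} {x : ℝ}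
    (hf : HasDerivAt f f' x) (hg : HasDerivAt g g' x) :
    HasDerivAt (fun t => pdot (f t) (g t)) (pdot f' (g x) + pdot (f x) g') x := by
  have hfi : ∀ i, HasDerivAt (fun t => f t i) (f' i) x := hasDerivAt_pi.mp hf
  have hgi : ∀ i, HasDerivAt (fun t => g t i) (g' i) x := hasDerivAt_pi.mp hg
  have H := ((((hfi 0).mul (hgi 0)).neg.sub ((hfi 1).mul (hgi 1))).add
      ((hfi 2).mul (hgi 2))).add ((hfi 3).mul (hgi 3))
  convert H using 1
  · rfl
  · rfl
  · funext t; simp [pdot]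
  · simp [pdot]; ring

lemma pdot_deriv_zero' {I : Set ℝ} (hI : IsOpen I) {f g : ℝ → Fin 4 → ℝ}
    {f' g' : Fin 4 → ℝ} {c : ℝ} {s : ℝ} (hs : s ∈ I)
    (hf : HasDerivAt f f' s) (hg : HasDerivAt g g' s)
    (hc : ∀ t ∈ I, pdot (f t) (g t) = c) :
    pdot f' (g s) + pdot (f s) g' = 0 := by
  have hev : (fun t => pdot (f t) (g t)) =ᶠ[nhds s] fun _ => c :=
    Filter.eventuallyEq_of_mem (hI.mem_nhds hs) (fun t ht => hc t ht)
  have h0 : deriv (fun t => pdot (f t) (g t)) s = 0 := by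
    rw [hev.deriv_eq]; exact deriv_const s c
  rw [(hasDerivAt_pdot' hf hg).deriv] at h0
  exact h0

lemma pdot_tripleProd_transform' (φ a : ℝ) (x u v w : Fin 4 → ℝ) :
    pdot x (tripleProd
      (Real.cosh φ • u + Real.sinh φ • (Real.cos a • v + Real.sin a • w))
      (Real.sinh φ • u + Real.cosh φ • (Real.cos a • v + Real.sin a • w))
      ((-Real.sin a) • v + Real.cos a • w)) = pdot x (tripleProd u v w) := by
  have h1 := Real.cosh_sq_sub_sinh_sq φ
  have h2 := Real.sin_sq_add_cos_sq a
  simp only [pdot, tripleProd, Matrix.cons_val_zero, Matrix.cons_val_one, Matrix.head_cons,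
    Matrix.cons_val_two, Matrix.tail_cons, Matrix.cons_val_three, Pi.add_apply, Pi.smul_apply,
    smul_eq_mul, Pi.neg_apply, neg_mul, neg_neg]
  linear_combination (norm := (simp only [det3]; ring1))
    ((Real.cos a ^ 2 + Real.sin a ^ 2) *
      (-(x 0 * (-det3 (u 1) (u 2) (u 3) (v 1) (v 2) (v 3) (w 1) (w 2) (w 3)))
        - x 1 * det3 (u 0) (u 2) (u 3) (v 0) (v 2) (v 3) (w 0) (w 2) (w 3)
        + x 2 * det3 (u 0) (u 1) (u 3) (v 0) (v 1) (v 3) (w 0) (w 1) (w 3)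
        + x 3 * (-det3 (u 0) (u 1) (u 2) (v 0) (v 1) (v 2) (w 0) (w 1) (w 2)))) * h1 +
    ((-(x 0 * (-det3 (u 1) (u 2) (u 3) (v 1) (v 2) (v 3) (w 1) (w 2) (w 3)))
        - x 1 * det3 (u 0) (u 2) (u 3) (v 0) (v 2) (v 3) (w 0) (w 2) (w 3)
        + x 2 * det3 (u 0) (u 1) (u 3) (v 0) (v 1) (v 3) (w 0) (w 1) (w 3)
        + x 3 * (-det3 (u 0) (u 1) (u 2) (v 0) (v 1) (v 2) (w 0) (w 1) (w 2)))) * h2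

lemma parallel_pointwise (I : Set ℝ) (hI : IsOpen I) (γ v₁ v₂ : ℝ → Fin 4 → ℝ)
    (hfr : TimelikeFramed I γ v₁ v₂) (φ : ℝ) (θ : ℝ → ℝ) (hθsm : ContDiffOn ℝ (⊤ : ℕ∞) θ I)
    (s : ℝ) (hs : s ∈ I) (hθ's : deriv θ s = -pdot (deriv v₁ s) (v₂ s)) :
    pdot (deriv (fun t => Real.cosh φ • γ t +
        Real.sinh φ • (Real.cos (θ t) • v₁ t + Real.sin (θ t) • v₂ t)) s)
      (Real.sinh φ • γ s + Real.cosh φ • (Real.cos (θ s) • v₁ s + Real.sin (θ s) • v₂ s)) = 0 ∧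
    pdot (deriv (fun t => Real.cosh φ • γ t +
        Real.sinh φ • (Real.cos (θ t) • v₁ t + Real.sin (θ t) • v₂ t)) s)
      ((-Real.sin (θ s)) • v₁ s + Real.cos (θ s) • v₂ s) = 0 ∧
    tcurvA (fun t => Real.cosh φ • γ t +
        Real.sinh φ • (Real.cos (θ t) • v₁ t + Real.sin (θ t) • v₂ t))
      (fun t => Real.sinh φ • γ t +
        Real.cosh φ • (Real.cos (θ t) • v₁ t + Real.sin (θ t) • v₂ t))
      (fun t => (-Real.sin (θ t)) • v₁ t + Real.cos (θ t) • v₂ t) s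
      = Real.cosh φ * tcurvA γ v₁ v₂ s +
        Real.sinh φ * (Real.cos (θ s) * tcurvM γ v₁ v₂ s + Real.sin (θ s) * tcurvN γ v₁ v₂ s) ∧
    tcurvL (fun t => Real.sinh φ • γ t +
        Real.cosh φ • (Real.cos (θ t) • v₁ t + Real.sin (θ t) • v₂ t))
      (fun t => (-Real.sin (θ t)) • v₁ t + Real.cos (θ t) • v₂ t) s = 0 ∧
    tcurvM (fun t => Real.cosh φ • γ t +
        Real.sinh φ • (Real.cos (θ t) • v₁ t + Real.sin (θ t) • v₂ t))
      (fun t => Real.sinh φ • γ t +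
        Real.cosh φ • (Real.cos (θ t) • v₁ t + Real.sin (θ t) • v₂ t))
      (fun t => (-Real.sin (θ t)) • v₁ t + Real.cos (θ t) • v₂ t) s
      = Real.sinh φ * tcurvA γ v₁ v₂ s +
        Real.cosh φ * (Real.cos (θ s) * tcurvM γ v₁ v₂ s + Real.sin (θ s) * tcurvN γ v₁ v₂ s) ∧
    tcurvN (fun t => Real.cosh φ • γ t +
        Real.sinh φ • (Real.cos (θ t) • v₁ t + Real.sin (θ t) • v₂ t))
      (fun t => Real.sinh φ • γ t +
        Real.cosh φ • (Real.cos (θ t) • v₁ t + Real.sin (θ t) • v₂ t))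
      (fun t => (-Real.sin (θ t)) • v₁ t + Real.cos (θ t) • v₂ t) s
      = -Real.sin (θ s) * tcurvM γ v₁ v₂ s + Real.cos (θ s) * tcurvN γ v₁ v₂ s := by
  have hmem := hI.mem_nhds hs
  have Hγ : HasDerivAt γ (deriv γ s) s :=
    ((hfr.smooth_γ.contDiffAt hmem).differentiableAt (by simp)).hasDerivAt
  have Hv₁ : HasDerivAt v₁ (deriv v₁ s) s :=
    ((hfr.smooth_v₁.contDiffAt hmem).differentiableAt (by simp)).hasDerivAt
  have Hv₂ : HasDerivAt v₂ (deriv v₂ s) s :=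
    ((hfr.smooth_v₂.contDiffAt hmem).differentiableAt (by simp)).hasDerivAt
  have Hθ : HasDerivAt θ (deriv θ s) s :=
    ((hθsm.contDiffAt hmem).differentiableAt (by simp)).hasDerivAt
  have Hcos : HasDerivAt (fun t => Real.cos (θ t)) (-Real.sin (θ s) * deriv θ s) s := Hθ.cos
  have Hsin : HasDerivAt (fun t => Real.sin (θ t)) (Real.cos (θ s) * deriv θ s) s := Hθ.sin
  have Hin : HasDerivAt (fun t => Real.cos (θ t) • v₁ t + Real.sin (θ t) • v₂ t)
      ((Real.cos (θ s) • deriv v₁ s + (-Real.sin (θ s) * deriv θ s) • v₁ s)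
        + (Real.sin (θ s) • deriv v₂ s + (Real.cos (θ s) * deriv θ s) • v₂ s)) s :=
    (Hcos.smul Hv₁).add (Hsin.smul Hv₂)
  have HΓ : HasDerivAt (fun t => Real.cosh φ • γ t +
      Real.sinh φ • (Real.cos (θ t) • v₁ t + Real.sin (θ t) • v₂ t))
      (Real.cosh φ • deriv γ s +
        Real.sinh φ • ((Real.cos (θ s) • deriv v₁ s + (-Real.sin (θ s) * deriv θ s) • v₁ s)
          + (Real.sin (θ s) • deriv v₂ s + (Real.cos (θ s) * deriv θ s) • v₂ s))) s :=
    (Hγ.const_smul (Real.cosh φ)).add (Hin.const_smul (Real.sinh φ))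
  have HV₁ : HasDerivAt (fun t => Real.sinh φ • γ t +
      Real.cosh φ • (Real.cos (θ t) • v₁ t + Real.sin (θ t) • v₂ t))
      (Real.sinh φ • deriv γ s +
        Real.cosh φ • ((Real.cos (θ s) • deriv v₁ s + (-Real.sin (θ s) * deriv θ s) • v₁ s)
          + (Real.sin (θ s) • deriv v₂ s + (Real.cos (θ s) * deriv θ s) • v₂ s))) s :=
    (Hγ.const_smul (Real.sinh φ)).add (Hin.const_smul (Real.cosh φ))
  have HV₂ : HasDerivAt (fun t => (-Real.sin (θ t)) • v₁ t + Real.cos (θ t) • v₂ t)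
      (((-Real.sin (θ s)) • deriv v₁ s + (-(Real.cos (θ s) * deriv θ s)) • v₁ s)
        + (Real.cos (θ s) • deriv v₂ s + (-Real.sin (θ s) * deriv θ s) • v₂ s)) s :=
    (Hsin.neg.smul Hv₁).add (Hcos.smul Hv₂)
  -- algebraic facts
  have e1 := hfr.ads s hs
  have e2 := hfr.normv₁ s hs
  have e3 := hfr.normv₂ s hs
  have e4 := hfr.orth₁ s hs
  have e4' : pdot (v₁ s) (γ s) = 0 := by rw [pdot_comm']; exact e4
  have e5 := hfr.orth₂ s hs
  have e5' : pdot (v₂ s) (γ s) = 0 := by rw [pdot_comm']; exact e5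
  have e6 := hfr.orth₃ s hs
  have e6' : pdot (v₂ s) (v₁ s) = 0 := by rw [pdot_comm']; exact e6
  have t1 := hfr.tangent₁ s hs
  have t2 := hfr.tangent₂ s hs
  have d1 : pdot (deriv γ s) (γ s) = 0 := by
    have h := pdot_deriv_zero' hI hs Hγ Hγ hfr.ads
    have hc := pdot_comm' (γ s) (deriv γ s)
    linarith
  have d2 : pdot (deriv v₁ s) (v₁ s) = 0 := by
    have h := pdot_deriv_zero' hI hs Hv₁ Hv₁ hfr.normv₁
    have hc := pdot_comm' (v₁ s) (deriv v₁ s)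
    linarith
  have d3 : pdot (deriv v₂ s) (v₂ s) = 0 := by
    have h := pdot_deriv_zero' hI hs Hv₂ Hv₂ hfr.normv₂
    have hc := pdot_comm' (v₂ s) (deriv v₂ s)
    linarith
  have d4 : pdot (deriv v₁ s) (γ s) = 0 := by
    have h := pdot_deriv_zero' hI hs Hγ Hv₁ hfr.orth₁
    have hc := pdot_comm' (γ s) (deriv v₁ s)
    linarith
  have d5 : pdot (deriv v₂ s) (γ s) = 0 := by
    have h := pdot_deriv_zero' hI hs Hγ Hv₂ hfr.orth₂
    have hc := pdot_comm' (γ s) (deriv v₂ s)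
    linarith
  have d6 : pdot (deriv v₂ s) (v₁ s) = -pdot (deriv v₁ s) (v₂ s) := by
    have h := pdot_deriv_zero' hI hs Hv₁ Hv₂ hfr.orth₃
    have hc := pdot_comm' (v₁ s) (deriv v₂ s)
    linarith
  -- mu facts
  have z1 : pdot (γ s) (muOf γ v₁ v₂ s) = 0 := pdot_trip_left _ _ _
  have z2 : pdot (v₁ s) (muOf γ v₁ v₂ s) = 0 := pdot_trip_mid _ _ _
  have z3 : pdot (v₂ s) (muOf γ v₁ v₂ s) = 0 := pdot_trip_right _ _ _
  have mA : pdot (deriv γ s) (muOf γ v₁ v₂ s) = -tcurvA γ v₁ v₂ s := by simp [tcurvA]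
  have mM : pdot (deriv v₁ s) (muOf γ v₁ v₂ s) = -tcurvM γ v₁ v₂ s := by simp [tcurvM]
  have mN : pdot (deriv v₂ s) (muOf γ v₁ v₂ s) = -tcurvN γ v₁ v₂ s := by simp [tcurvN]
  have hmu : ∀ x : Fin 4 → ℝ, pdot x (muOf
      (fun t => Real.cosh φ • γ t +
        Real.sinh φ • (Real.cos (θ t) • v₁ t + Real.sin (θ t) • v₂ t))
      (fun t => Real.sinh φ • γ t +
        Real.cosh φ • (Real.cos (θ t) • v₁ t + Real.sin (θ t) • v₂ t))
      (fun t => (-Real.sin (θ t)) • v₁ t + Real.cos (θ t) • v₂ t) s)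
      = pdot x (muOf γ v₁ v₂ s) := by
    intro x
    simp only [muOf]
    exact pdot_tripleProd_transform' φ (θ s) x (γ s) (v₁ s) (v₂ s)
  refine ⟨?_, ?_, ?_, ?_, ?_, ?_⟩
  · rw [HΓ.deriv]
    simp only [pdot_add_left', pdot_add_right', pdot_smul_left', pdot_smul_right',
      e1, e2, e3, e4, e4', e5, e5', e6, e6', t1, t2, d1, d2, d3, d4, d5, d6, hθ's]
    ring
  · rw [HΓ.deriv]
    simp only [pdot_add_left', pdot_add_right', pdot_smul_left', pdot_smul_right',
      e1, e2, e3, e4, e4', e5, e5', e6, e6', t1, t2, d1, d2, d3, d4, d5, d6, hθ's]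
    ring
  · rw [tcurvA, HΓ.deriv, hmu]
    simp only [pdot_add_left', pdot_add_right', pdot_smul_left', pdot_smul_right',
      z1, z2, z3, mA, mM, mN, hθ's]
    ring
  · rw [tcurvL, HV₁.deriv]
    simp only [pdot_add_left', pdot_add_right', pdot_smul_left', pdot_smul_right',
      e1, e2, e3, e4, e4', e5, e5', e6, e6', t1, t2, d1, d2, d3, d4, d5, d6, hθ's]
    ring
  · rw [tcurvM, HV₁.deriv, hmu]
    simp only [pdot_add_left', pdot_add_right', pdot_smul_left', pdot_smul_right',
      z1, z2, z3, mA, mM, mN, hθ's]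
    ring
  · rw [tcurvN, HV₂.deriv, hmu]
    simp only [pdot_add_left', pdot_add_right', pdot_smul_left', pdot_smul_right',
      z1, z2, z3, mA, mM, mN, hθ's]
    ring

end ParallelAux
theorem timelike_parallel_is_framed
    (I : Set ℝ) (hI : IsOpen I) (hIc : I.OrdConnected)
    (γ v₁ v₂ : ℝ → Fin 4 → ℝ)
    (hfr : TimelikeFramed I γ v₁ v₂)
    (α ℓ m n : ℝ → ℝ)
    (hA : ∀ s ∈ I, α s = tcurvA γ v₁ v₂ s)
    (hL : ∀ s ∈ I, ℓ s = tcurvL v₁ v₂ s)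
    (hM : ∀ s ∈ I, m s = tcurvM γ v₁ v₂ s)
    (hN : ∀ s ∈ I, n s = tcurvN γ v₁ v₂ s)
    (φ : ℝ) (θ : ℝ → ℝ) (hθ : ContDiffOn ℝ (⊤ : ℕ∞) θ I)
    (hθ' : ∀ s ∈ I, deriv θ s = -ℓ s)
    (γp v₁p v₂p : ℝ → Fin 4 → ℝ)
    (hγp : ∀ s, γp s = Real.cosh φ • γ s +
      Real.sinh φ • (Real.cos (θ s) • v₁ s + Real.sin (θ s) • v₂ s))
    (hv₁p : ∀ s, v₁p s = Real.sinh φ • γ s +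
      Real.cosh φ • (Real.cos (θ s) • v₁ s + Real.sin (θ s) • v₂ s))
    (hv₂p : ∀ s, v₂p s = (-Real.sin (θ s)) • v₁ s + Real.cos (θ s) • v₂ s) :
    TimelikeFramed I γp v₁p v₂p ∧
    ∀ s ∈ I,
      tcurvA γp v₁p v₂p s
        = Real.cosh φ * α s + Real.sinh φ * (Real.cos (θ s) * m s + Real.sin (θ s) * n s) ∧
      tcurvL v₁p v₂p s = 0 ∧
      tcurvM γp v₁p v₂p s
        = Real.sinh φ * α s + Real.cosh φ * (Real.cos (θ s) * m s + Real.sin (θ s) * n s) ∧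
      tcurvN γp v₁p v₂p s = -Real.sin (θ s) * m s + Real.cos (θ s) * n s := by
  have hγpf : γp = fun t => Real.cosh φ • γ t +
      Real.sinh φ • (Real.cos (θ t) • v₁ t + Real.sin (θ t) • v₂ t) := funext hγp
  have hv₁pf : v₁p = fun t => Real.sinh φ • γ t +
      Real.cosh φ • (Real.cos (θ t) • v₁ t + Real.sin (θ t) • v₂ t) := funext hv₁p
  have hv₂pf : v₂p = fun t => (-Real.sin (θ t)) • v₁ t + Real.cos (θ t) • v₂ t := funext hv₂p
  subst hγpf hv₁pf hv₂pf
  have hth : ∀ s ∈ I, deriv θ s = -pdot (deriv v₁ s) (v₂ s) := by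
    intro s hs
    rw [hθ' s hs, hL s hs, tcurvL]
  have key := fun s (hs : s ∈ I) =>
    parallel_pointwise I hI γ v₁ v₂ hfr φ θ hθ s hs (hth s hs)
  have smθcos : ContDiffOn ℝ (⊤ : ℕ∞) (fun t => Real.cos (θ t)) I :=
    Real.contDiff_cos.comp_contDiffOn hθ
  have smθsin : ContDiffOn ℝ (⊤ : ℕ∞) (fun t => Real.sin (θ t)) I :=
    Real.contDiff_sin.comp_contDiffOn hθ
  have smin : ContDiffOn ℝ (⊤ : ℕ∞) (fun t => Real.cos (θ t) • v₁ t + Real.sin (θ t) • v₂ t) I :=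
    (smθcos.smul hfr.smooth_v₁).add (smθsin.smul hfr.smooth_v₂)
  constructor
  · refine ⟨(hfr.smooth_γ.const_smul (Real.cosh φ)).add (smin.const_smul (Real.sinh φ)),
      (hfr.smooth_γ.const_smul (Real.sinh φ)).add (smin.const_smul (Real.cosh φ)),
      (smθsin.neg.smul hfr.smooth_v₁).add (smθcos.smul hfr.smooth_v₂),
      ?_, ?_, ?_, ?_, ?_, ?_, fun s hs => (key s hs).1, fun s hs => (key s hs).2.1⟩
    · intro s hs
      have e4' : pdot (v₁ s) (γ s) = 0 := by rw [pdot_comm']; exact hfr.orth₁ s hs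
      have e5' : pdot (v₂ s) (γ s) = 0 := by rw [pdot_comm']; exact hfr.orth₂ s hs
      have e6' : pdot (v₂ s) (v₁ s) = 0 := by rw [pdot_comm']; exact hfr.orth₃ s hs
      have hch := Real.cosh_sq_sub_sinh_sq φ
      have hsc := Real.sin_sq_add_cos_sq (θ s)
      simp only [pdot_add_left', pdot_add_right', pdot_smul_left', pdot_smul_right',
        hfr.ads s hs, hfr.normv₁ s hs, hfr.normv₂ s hs, hfr.orth₁ s hs, hfr.orth₂ s hs,
        hfr.orth₃ s hs, e4', e5', e6']
      linear_combination (-1 : ℝ) * hch + Real.sinh φ ^ 2 * hsc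
    · intro s hs
      have e4' : pdot (v₁ s) (γ s) = 0 := by rw [pdot_comm']; exact hfr.orth₁ s hs
      have e5' : pdot (v₂ s) (γ s) = 0 := by rw [pdot_comm']; exact hfr.orth₂ s hs
      have e6' : pdot (v₂ s) (v₁ s) = 0 := by rw [pdot_comm']; exact hfr.orth₃ s hs
      have hch := Real.cosh_sq_sub_sinh_sq φ
      have hsc := Real.sin_sq_add_cos_sq (θ s)
      simp only [pdot_add_left', pdot_add_right', pdot_smul_left', pdot_smul_right',
        hfr.ads s hs, hfr.normv₁ s hs, hfr.normv₂ s hs, hfr.orth₁ s hs, hfr.orth₂ s hs,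
        hfr.orth₃ s hs, e4', e5', e6']
      linear_combination hch + Real.cosh φ ^ 2 * hsc
    · intro s hs
      have e6' : pdot (v₂ s) (v₁ s) = 0 := by rw [pdot_comm']; exact hfr.orth₃ s hs
      have hsc := Real.sin_sq_add_cos_sq (θ s)
      simp only [pdot_add_left', pdot_add_right', pdot_smul_left', pdot_smul_right',
        hfr.normv₁ s hs, hfr.normv₂ s hs, hfr.orth₃ s hs, e6']
      linear_combination hsc
    · intro s hs
      have e4' : pdot (v₁ s) (γ s) = 0 := by rw [pdot_comm']; exact hfr.orth₁ s hs
      have e5' : pdot (v₂ s) (γ s) = 0 := by rw [pdot_comm']; exact hfr.orth₂ s hs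
      have e6' : pdot (v₂ s) (v₁ s) = 0 := by rw [pdot_comm']; exact hfr.orth₃ s hs
      have hch := Real.cosh_sq_sub_sinh_sq φ
      have hsc := Real.sin_sq_add_cos_sq (θ s)
      simp only [pdot_add_left', pdot_add_right', pdot_smul_left', pdot_smul_right',
        hfr.ads s hs, hfr.normv₁ s hs, hfr.normv₂ s hs, hfr.orth₁ s hs, hfr.orth₂ s hs,
        hfr.orth₃ s hs, e4', e5', e6']
      linear_combination Real.sinh φ * Real.cosh φ * hsc
    · intro s hs
      have e4' : pdot (v₁ s) (γ s) = 0 := by rw [pdot_comm']; exact hfr.orth₁ s hs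
      have e5' : pdot (v₂ s) (γ s) = 0 := by rw [pdot_comm']; exact hfr.orth₂ s hs
      have e6' : pdot (v₂ s) (v₁ s) = 0 := by rw [pdot_comm']; exact hfr.orth₃ s hs
      simp only [pdot_add_left', pdot_add_right', pdot_smul_left', pdot_smul_right',
        hfr.ads s hs, hfr.normv₁ s hs, hfr.normv₂ s hs, hfr.orth₁ s hs, hfr.orth₂ s hs,
        hfr.orth₃ s hs, e4', e5', e6']
      ring
    · intro s hs
      have e4' : pdot (v₁ s) (γ s) = 0 := by rw [pdot_comm']; exact hfr.orth₁ s hs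
      have e5' : pdot (v₂ s) (γ s) = 0 := by rw [pdot_comm']; exact hfr.orth₂ s hs
      have e6' : pdot (v₂ s) (v₁ s) = 0 := by rw [pdot_comm']; exact hfr.orth₃ s hs
      simp only [pdot_add_left', pdot_add_right', pdot_smul_left', pdot_smul_right',
        hfr.ads s hs, hfr.normv₁ s hs, hfr.normv₂ s hs, hfr.orth₁ s hs, hfr.orth₂ s hs,
        hfr.orth₃ s hs, e4', e5', e6']
      ring
  · intro s hs
    exact ⟨by rw [hA s hs, hM s hs, hN s hs]; exact (key s hs).2.2.1,
      (key s hs).2.2.2.1,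
      by rw [hA s hs, hM s hs, hN s hs]; exact (key s hs).2.2.2.2.1,
      by rw [hM s hs, hN s hs]; exact (key s hs).2.2.2.2.2⟩
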